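/- As α → 1, FGW_{α,p,q}(μ,ν) converges to GW_{pq}(μ_X, ν_Y)^q, the q-th power of the (pq)-Gromov–Wasserstein distance between the structure marginals. -/

import Mathlib

open MeasureTheory ENNReal Set

noncomputable section

/-- The set of couplings of two probability measures on `X × Ω` and `Y × Ω`. -/
def Couplings {X Y Ω : Type*} [MeasurableSpace X] [MeasurableSpace Y] [MeasurableSpace Ω]
    (μ : Measure (X × Ω)) (ν : Measure (Y × Ω)) : Set (Measure ((X × Ω) × (Y × Ω))) :=
  {π | π.map Prod.fst = μ ∧ π.map Prod.snd = ν}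

/-- The fused Gromov-Wasserstein cost of a coupling `π`, with trade-off `α` and
exponents `p, q`. Here `w.1.1, w.2.1` are the structure points `x, y` and
`w.1.2, w.2.2` the feature points `a, b`. -/
def fgwE {X Y Ω : Type*} [MetricSpace X] [MetricSpace Y] [MetricSpace Ω]
    [MeasurableSpace X] [MeasurableSpace Y] [MeasurableSpace Ω]
    (α p q : ℝ) (π : Measure ((X × Ω) × (Y × Ω))) : ℝ≥0∞ :=
  ∫⁻ w, (∫⁻ w', ENNReal.ofReal
      (((1 - α) * dist w.1.2 w.2.2 ^ q
        + α * |dist w.1.1 w'.1.1 - dist w.2.1 w'.2.1| ^ q) ^ p) ∂π) ∂π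

/-- The fused Gromov-Wasserstein distance. -/
def FGW {X Y Ω : Type*} [MetricSpace X] [MetricSpace Y] [MetricSpace Ω]
    [MeasurableSpace X] [MeasurableSpace Y] [MeasurableSpace Ω]
    (α p q : ℝ) (μ : Measure (X × Ω)) (ν : Measure (Y × Ω)) : ℝ≥0∞ :=
  (⨅ π ∈ Couplings μ ν, fgwE α p q π) ^ (1 / p)


/-- The `r`-Gromov-Wasserstein distance between measures on metric spaces `X` and `Y`. -/
def GW {X Y : Type*} [MetricSpace X] [MetricSpace Y]
    [MeasurableSpace X] [MeasurableSpace Y]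
    (r : ℝ) (μX : Measure X) (νY : Measure Y) : ℝ≥0∞ :=
  (⨅ γ ∈ {γ : Measure (X × Y) | γ.map Prod.fst = μX ∧ γ.map Prod.snd = νY},
    ∫⁻ z, (∫⁻ z', ENNReal.ofReal (|dist z.1 z'.1 - dist z.2 z'.2| ^ r) ∂γ) ∂γ) ^ (1 / r)

/-! For `0 ≤ α ≤ 1` and `0 ≤ A, B ≤ M` the fused integrand `((1 - α) A + α B) ^ p` lies between
`α ^ p B ^ p` and `B ^ p + (1 - α) p M ^ p`, and `B ^ p = |d_X - d_Y| ^ (p q)` is the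
Gromov–Wasserstein integrand of the structure part `(x, y)` of the coupling. Compactness bounds all
distances, so with `L` the infimum of the `GW_{pq}` cost over structure parts of couplings of `μ`
and `ν`, the infimal fused cost is squeezed between `α ^ p L` and `L + (1 - α) K`. Gluing `μ` and
`ν` along their conditional feature kernels lifts every coupling of the structure marginals to a
coupling of `μ` and `ν`, so `L` is the `GW_{pq}` cost itself, and taking `1/p`-th powers turns
it into `GW_{pq} ^ q`. -/

open ProbabilityTheory Filter Topology

theorem rpow_natCast_mul_eq_rpow_pow {x : ℝ} (hx : 0 ≤ x) (n : ℕ) (z : ℝ) :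
    x ^ ((n : ℝ) * z) = (x ^ z) ^ n := by
  rw [mul_comm, Real.rpow_mul hx, Real.rpow_natCast]

theorem pow_mul_pow_le_convexComb_pow {p : ℕ} {α A B : ℝ} (hα0 : 0 ≤ α) (hα1 : α ≤ 1)
    (hA : 0 ≤ A) (hB : 0 ≤ B) : α ^ p * B ^ p ≤ ((1 - α) * A + α * B) ^ p := by
  rw [← mul_pow]
  gcongr
  nlinarith

theorem convexComb_pow_le_pow_add {p : ℕ} {α A B M : ℝ} (hα0 : 0 ≤ α) (hα1 : α ≤ 1)
    (hA : 0 ≤ A) (hB : 0 ≤ B) (hAM : A ≤ M) (hBM : B ≤ M) :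
    ((1 - α) * A + α * B) ^ p ≤ B ^ p + (1 - α) * (p * M ^ p) := by
  set x := (1 - α) * A + α * B
  have hx : |x| ≤ M := by rw [abs_le]; constructor <;> nlinarith
  have hxB : |x - B| ≤ (1 - α) * M := by
    rw [show x - B = (1 - α) * (A - B) by ring, abs_mul, abs_of_nonneg (by linarith)]
    gcongr
    rw [abs_le]
    constructor <;> linarith
  have hmax : max |x| |B| ≤ M := max_le hx (by rwa [abs_of_nonneg hB])
  rcases p with _ | n
  · simp
  calc x ^ (n + 1) ≤ B ^ (n + 1) + |x ^ (n + 1) - B ^ (n + 1)| := by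
        linarith [le_abs_self (x ^ (n + 1) - B ^ (n + 1))]
    _ ≤ B ^ (n + 1) + (1 - α) * M * (n + 1 : ℕ) * M ^ n := by
        grw [abs_pow_sub_pow_le, hxB, hmax, Nat.add_sub_cancel]
        exact mul_nonneg (mul_nonneg (by linarith) (hB.trans hBM)) (Nat.cast_nonneg _)
    _ = B ^ (n + 1) + (1 - α) * ((n + 1 : ℕ) * M ^ (n + 1)) := by ring

theorem lintegral_lintegral_map {A B : Type*} [MeasurableSpace A] [MeasurableSpace B]
    {π : Measure A} [IsFiniteMeasure π] {g : A → B} (hg : Measurable g) {F : B → B → ℝ≥0∞}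
    (hF : Measurable (Function.uncurry F)) :
    ∫⁻ z, ∫⁻ z', F z z' ∂π.map g ∂π.map g = ∫⁻ w, ∫⁻ w', F (g w) (g w') ∂π ∂π := by
  rw [lintegral_map (hF.lintegral_prod_right (ν := π.map g)) hg]
  exact lintegral_congr fun w => lintegral_map (hF.comp measurable_prodMk_left) hg

theorem dist_le_diam_univ {Z : Type*} [PseudoMetricSpace Z] [BoundedSpace Z] (z z' : Z) :
    dist z z' ≤ Metric.diam (univ : Set Z) :=
  Metric.dist_le_diam_of_mem BoundedSpace.bounded_univ trivial trivial

section GromovWasserstein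

variable {X Y Ω : Type*} [MetricSpace X] [MetricSpace Y]
  [MeasurableSpace X] [MeasurableSpace Y] [MeasurableSpace Ω]

def gwCost (r : ℝ) (γ : Measure (X × Y)) : ℝ≥0∞ :=
  ∫⁻ z, ∫⁻ z', ENNReal.ofReal (|dist z.1 z'.1 - dist z.2 z'.2| ^ r) ∂γ ∂γ

theorem gwCost_map_prodMap_fst [SecondCountableTopology X] [SecondCountableTopology Y]
    [BorelSpace X] [BorelSpace Y] (r : ℝ) (π : Measure ((X × Ω) × (Y × Ω)))
    [IsFiniteMeasure π] :
    gwCost r (π.map (Prod.map Prod.fst Prod.fst)) =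
      ∫⁻ w, ∫⁻ w', ENNReal.ofReal (|dist w.1.1 w'.1.1 - dist w.2.1 w'.2.1| ^ r) ∂π ∂π :=
  lintegral_lintegral_map (by fun_prop) (by fun_prop)

variable [MetricSpace Ω] [SecondCountableTopology X] [SecondCountableTopology Y]
  [BorelSpace X] [BorelSpace Y]

theorem ofReal_pow_mul_gwCost_le_fgwE (p : ℕ) {α : ℝ} (hα0 : 0 ≤ α) (hα1 : α ≤ 1) (q : ℝ)
    (π : Measure ((X × Ω) × (Y × Ω))) [IsFiniteMeasure π] :
    ENNReal.ofReal (α ^ p) * gwCost (p * q) (π.map (Prod.map Prod.fst Prod.fst)) ≤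
      fgwE α p q π := by
  rw [gwCost_map_prodMap_fst, ← lintegral_const_mul' _ _ ofReal_ne_top]
  refine lintegral_mono fun w => ?_
  rw [← lintegral_const_mul' _ _ ofReal_ne_top]
  refine lintegral_mono fun w' => ?_
  rw [← ENNReal.ofReal_mul (by positivity), rpow_natCast_mul_eq_rpow_pow (abs_nonneg _),
    Real.rpow_natCast]
  exact ENNReal.ofReal_le_ofReal
    (pow_mul_pow_le_convexComb_pow hα0 hα1 (by positivity) (by positivity))

theorem exists_fgwE_le_gwCost_add [BoundedSpace X] [BoundedSpace Y] [BoundedSpace Ω]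
    (p : ℕ) {q : ℝ} (hq : 0 ≤ q) :
    ∃ K : ℝ, ∀ α : ℝ, 0 ≤ α → α ≤ 1 → ∀ π : Measure ((X × Ω) × (Y × Ω)),
      IsProbabilityMeasure π → fgwE α p q π ≤
        gwCost (p * q) (π.map (Prod.map Prod.fst Prod.fst)) + ENNReal.ofReal ((1 - α) * K) := by
  set D := Metric.diam (univ : Set X) + Metric.diam (univ : Set Y) + Metric.diam (univ : Set Ω)
  have hX : 0 ≤ Metric.diam (univ : Set X) := Metric.diam_nonneg
  have hY : 0 ≤ Metric.diam (univ : Set Y) := Metric.diam_nonneg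
  have hΩ (a b : Ω) : dist a b ^ q ≤ D ^ q := by
    have := dist_le_diam_univ a b
    gcongr
    linarith
  have hXY (x x' : X) (y y' : Y) : |dist x x' - dist y y'| ^ q ≤ D ^ q := by
    have := dist_le_diam_univ x x'
    have := dist_le_diam_univ y y'
    have : 0 ≤ Metric.diam (univ : Set Ω) := Metric.diam_nonneg
    gcongr
    rw [abs_le]
    constructor <;> linarith [dist_nonneg (x := x) (y := x'), dist_nonneg (x := y) (y := y')]
  refine ⟨p * (D ^ q) ^ p, fun α hα0 hα1 π _ => ?_⟩
  have hpoint (w w' : (X × Ω) × (Y × Ω)) :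
      ENNReal.ofReal (((1 - α) * dist w.1.2 w.2.2 ^ q
        + α * |dist w.1.1 w'.1.1 - dist w.2.1 w'.2.1| ^ q) ^ (p : ℝ)) ≤
      ENNReal.ofReal (|dist w.1.1 w'.1.1 - dist w.2.1 w'.2.1| ^ ((p : ℝ) * q)) +
        ENNReal.ofReal ((1 - α) * (p * (D ^ q) ^ p)) := by
    rw [rpow_natCast_mul_eq_rpow_pow (abs_nonneg _), Real.rpow_natCast]
    exact (ENNReal.ofReal_le_ofReal (convexComb_pow_le_pow_add hα0 hα1 (by positivity)
      (by positivity) (hΩ _ _) (hXY _ _ _ _))).trans ENNReal.ofReal_add_le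
  rw [gwCost_map_prodMap_fst]
  calc fgwE α p q π
      ≤ ∫⁻ w, ∫⁻ w', (ENNReal.ofReal (|dist w.1.1 w'.1.1 - dist w.2.1 w'.2.1| ^ ((p : ℝ) * q)) +
          ENNReal.ofReal ((1 - α) * (p * (D ^ q) ^ p))) ∂π ∂π :=
        lintegral_mono fun w => lintegral_mono fun w' => hpoint w w'
    _ = _ := by
        simp only [lintegral_add_right _ measurable_const, lintegral_const, measure_univ, mul_one]

end GromovWasserstein

theorem MeasureTheory.Measure.map_prodMap_compProd {A A' B C : Type*} [MeasurableSpace A]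
    [MeasurableSpace A'] [MeasurableSpace B] [MeasurableSpace C] (γ : Measure A) [SFinite γ]
    (ξ : Kernel A B) [IsSFiniteKernel ξ] {f : A → A'} (hf : Measurable f) {h : B → C} (hh : Measurable h)
    (κ : Kernel A' C) [IsSFiniteKernel κ] (hξ : ∀ a, (ξ a).map h = κ (f a)) :
    (γ ⊗ₘ ξ).map (Prod.map f h) = γ.map f ⊗ₘ κ := by
  ext s hs
  have hfh : Measurable (Prod.map f h) := hf.prodMap hh
  rw [Measure.map_apply hfh hs, Measure.compProd_apply (hfh hs), Measure.compProd_apply hs,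
    lintegral_map (Kernel.measurable_kernel_prodMk_left hs) hf]
  refine lintegral_congr fun a => ?_
  rw [← hξ, Measure.map_apply hh (measurable_prodMk_left hs)]
  rfl

section Couplings

variable {X Y Ω : Type*} [MeasurableSpace X] [MeasurableSpace Y] [MeasurableSpace Ω]
  {μ : Measure (X × Ω)} {ν : Measure (Y × Ω)}

theorem isProbabilityMeasure_of_mem_couplings [IsProbabilityMeasure μ]
    {π : Measure ((X × Ω) × (Y × Ω))} (hπ : π ∈ Couplings μ ν) : IsProbabilityMeasure π :=
  (Measure.isProbabilityMeasure_map_iff measurable_fst.aemeasurable).mp (hπ.1 ▸ inferInstance)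

theorem map_prodMap_fst_mem_couplings {π : Measure ((X × Ω) × (Y × Ω))}
    (hπ : π ∈ Couplings μ ν) :
    (π.map (Prod.map Prod.fst Prod.fst)).map Prod.fst = μ.map Prod.fst ∧
      (π.map (Prod.map Prod.fst Prod.fst)).map Prod.snd = ν.map Prod.fst := by
  rw [Measure.map_map measurable_fst (by fun_prop), Measure.map_map measurable_snd (by fun_prop),
    ← hπ.1, ← hπ.2, Measure.map_map measurable_fst measurable_fst,
    Measure.map_map measurable_fst measurable_snd]
  exact ⟨rfl, rfl⟩

theorem exists_mem_couplings_map_prodMap_fst_eq [StandardBorelSpace Ω]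
    [IsProbabilityMeasure μ] [IsProbabilityMeasure ν] {γ : Measure (X × Y)}
    (hγX : γ.map Prod.fst = μ.map Prod.fst) (hγY : γ.map Prod.snd = ν.map Prod.fst) :
    ∃ π ∈ Couplings μ ν, π.map (Prod.map Prod.fst Prod.fst) = γ := by
  have : IsProbabilityMeasure γ :=
    (Measure.isProbabilityMeasure_map_iff measurable_fst.aemeasurable).mp
      (hγX ▸ Measure.isProbabilityMeasure_map measurable_fst.aemeasurable)
  have : Nonempty Ω := ⟨(nonempty_of_isProbabilityMeasure μ).some.2⟩
  let ξ : Kernel (X × Y) (Ω × Ω) :=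
    μ.condKernel.comap Prod.fst measurable_fst ×ₖ ν.condKernel.comap Prod.snd measurable_snd
  let e : (X × Y) × (Ω × Ω) → (X × Ω) × (Y × Ω) := fun z => ((z.1.1, z.2.1), (z.1.2, z.2.2))
  have he : Measurable e := by fun_prop
  refine ⟨(γ ⊗ₘ ξ).map e, ⟨?_, ?_⟩, ?_⟩
  · rw [Measure.map_map measurable_fst he]
    refine (Measure.map_prodMap_compProd γ ξ measurable_fst measurable_fst μ.condKernel
      fun a => ?_).trans ?_
    · rw [← Kernel.fst_apply, Kernel.fst_prod, Kernel.comap_apply]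
    · rw [hγX]
      exact μ.disintegrate μ.condKernel
  · rw [Measure.map_map measurable_snd he]
    refine (Measure.map_prodMap_compProd γ ξ measurable_snd measurable_snd ν.condKernel
      fun a => ?_).trans ?_
    · rw [← Kernel.snd_apply, Kernel.snd_prod, Kernel.comap_apply]
    · rw [hγY]
      exact ν.disintegrate ν.condKernel
  · rw [Measure.map_map (by fun_prop) he]
    exact Measure.fst_compProd γ ξ

end Couplings

section Limit

variable {X Y Ω : Type*} [MetricSpace X] [MetricSpace Y]
  [MeasurableSpace X] [MeasurableSpace Y] [MeasurableSpace Ω] [StandardBorelSpace Ω]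
  {μ : Measure (X × Ω)} {ν : Measure (Y × Ω)} [IsProbabilityMeasure μ] [IsProbabilityMeasure ν]

theorem biInf_gwCost_eq_biInf_couplings (r : ℝ) :
    ⨅ γ ∈ {γ : Measure (X × Y) | γ.map Prod.fst = μ.map Prod.fst ∧
        γ.map Prod.snd = ν.map Prod.fst}, gwCost r γ =
      ⨅ π ∈ Couplings μ ν, gwCost r (π.map (Prod.map Prod.fst Prod.fst)) := by
  refine le_antisymm (le_iInf₂ fun π hπ => iInf₂_le (π.map _) (map_prodMap_fst_mem_couplings hπ))
    (le_iInf₂ fun γ hγ => ?_)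
  obtain ⟨π, hπ, rfl⟩ := exists_mem_couplings_map_prodMap_fst_eq hγ.1 hγ.2
  exact iInf₂_le π hπ

variable [MetricSpace Ω] [BoundedSpace X] [BoundedSpace Y] [BoundedSpace Ω]
  [SecondCountableTopology X] [SecondCountableTopology Y] [BorelSpace X] [BorelSpace Y]

theorem tendsto_biInf_fgwE (p : ℕ) {q : ℝ} (hq : 0 ≤ q) :
    Tendsto (fun α => ⨅ π ∈ Couplings μ ν, fgwE α p q π) (𝓝[Icc 0 1] 1)
      (𝓝 (⨅ γ ∈ {γ : Measure (X × Y) | γ.map Prod.fst = μ.map Prod.fst ∧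
        γ.map Prod.snd = ν.map Prod.fst}, gwCost (p * q) γ)) := by
  rw [biInf_gwCost_eq_biInf_couplings]
  set L := ⨅ π ∈ Couplings μ ν, gwCost (p * q) (π.map (Prod.map Prod.fst Prod.fst))
  obtain ⟨K, hK⟩ := exists_fgwE_le_gwCost_add (X := X) (Y := Y) (Ω := Ω) p hq
  have hlower : Tendsto (fun α : ℝ => ENNReal.ofReal (α ^ p) * L) (𝓝[Icc 0 1] 1) (𝓝 L) := by
    have := ENNReal.Tendsto.mul_const (b := L)
      ((ENNReal.continuous_ofReal.comp (continuous_pow p)).tendsto 1) (Or.inl (by simp))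
    simpa using this.mono_left nhdsWithin_le_nhds
  have hupper :
      Tendsto (fun α : ℝ => L + ENNReal.ofReal ((1 - α) * K)) (𝓝[Icc 0 1] 1) (𝓝 L) := by
    have : Continuous fun α : ℝ => L + ENNReal.ofReal ((1 - α) * K) :=
      continuous_const.add (ENNReal.continuous_ofReal.comp (by fun_prop))
    simpa using (this.tendsto 1).mono_left nhdsWithin_le_nhds
  refine tendsto_of_tendsto_of_tendsto_of_le_of_le' hlower hupper ?_ ?_ <;>
    filter_upwards [self_mem_nhdsWithin] with α ⟨hα0, hα1⟩
  · refine le_iInf₂ fun π hπ => ?_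
    have := isProbabilityMeasure_of_mem_couplings hπ
    calc ENNReal.ofReal (α ^ p) * L
        ≤ ENNReal.ofReal (α ^ p) * gwCost (p * q) (π.map (Prod.map Prod.fst Prod.fst)) := by
          gcongr
          exact iInf₂_le π hπ
      _ ≤ fgwE α p q π := ofReal_pow_mul_gwCost_le_fgwE p hα0 hα1 q π
  · calc ⨅ π ∈ Couplings μ ν, fgwE α p q π
        ≤ ⨅ π ∈ Couplings μ ν, (gwCost (p * q) (π.map (Prod.map Prod.fst Prod.fst)) +
            ENNReal.ofReal ((1 - α) * K)) :=
          iInf₂_mono fun π hπ => hK α hα0 hα1 π (isProbabilityMeasure_of_mem_couplings hπ)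
      _ = L + ENNReal.ofReal ((1 - α) * K) := by simp only [L, ENNReal.iInf_add]

end Limit

theorem stmt16_general {X Y Ω : Type*} [MetricSpace X] [MetricSpace Y] [MetricSpace Ω]
    [CompactSpace X] [CompactSpace Y] [CompactSpace Ω]
    [MeasurableSpace X] [BorelSpace X] [MeasurableSpace Y] [BorelSpace Y]
    [MeasurableSpace Ω] [BorelSpace Ω]
    (μ : Measure (X × Ω)) (ν : Measure (Y × Ω))
    [IsProbabilityMeasure μ] [IsProbabilityMeasure ν]
    (p : ℕ) (q : ℝ) (hq : 1 ≤ q) :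
    Filter.Tendsto (fun α : ℝ => FGW α (p : ℝ) q μ ν)
      (nhdsWithin 1 (Set.Ioo (0 : ℝ) 1))
      (nhds ((GW ((p : ℝ) * q) (μ.map Prod.fst) (ν.map Prod.fst)) ^ q)) := by
  have hlim := (tendsto_biInf_fgwE (μ := μ) (ν := ν) p (zero_le_one.trans hq)).mono_left
    (nhdsWithin_mono _ Ioo_subset_Icc_self)
  have hexp : 1 / ((p : ℝ) * q) * q = 1 / p := by
    rw [one_div_mul_eq_div, div_mul_cancel_right₀ (by positivity : q ≠ 0), one_div]
  rw [GW, ← ENNReal.rpow_mul, hexp]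
  exact (ENNReal.continuous_rpow_const.tendsto _).comp hlim

theorem stmt16 {X Y Ω : Type*} [MetricSpace X] [MetricSpace Y] [MetricSpace Ω]
    [CompactSpace X] [CompactSpace Y] [CompactSpace Ω]
    [MeasurableSpace X] [BorelSpace X] [MeasurableSpace Y] [BorelSpace Y]
    [MeasurableSpace Ω] [BorelSpace Ω]
    (μ : Measure (X × Ω)) (ν : Measure (Y × Ω))
    [IsProbabilityMeasure μ] [IsProbabilityMeasure ν]
    (p : ℕ) (hp : 1 ≤ p) (q : ℝ) (hq : 1 ≤ q) :
    Filter.Tendsto (fun α : ℝ => FGW α (p : ℝ) q μ ν)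
      (nhdsWithin 1 (Set.Ioo (0 : ℝ) 1))
      (nhds ((GW ((p : ℝ) * q) (μ.map Prod.fst) (ν.map Prod.fst)) ^ q)) :=
  stmt16_general μ ν p q hq

end
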